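/- (LP reformulation of standard robustness) For a no-signaling behavior P, 1 + R_S(P) = (1/4) · min { uᵀ P' : P' ∈ Cone(L), P' − P ∈ Cone(L) }, where u is the all-ones vector. -/

import Mathlib

open Finset

def IsLocal {A B : Type*} [Fintype A] [Fintype B] [DecidableEq A] [DecidableEq B]
    (p : Fin 2 → Fin 2 → A → B → ℝ) : Prop :=
  ∃ l : (Fin 2 → A) → (Fin 2 → B) → ℝ,
    (∀ f g, 0 ≤ l f g) ∧ (∑ f, ∑ g, l f g) = 1 ∧
    ∀ x y a b, p x y a b = ∑ f, ∑ g, if f x = a ∧ g y = b then l f g else 0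

def NoSignaling {A B : Type*} [Fintype A] [Fintype B]
    (p : Fin 2 → Fin 2 → A → B → ℝ) : Prop :=
  (∀ (x : Fin 2) (a : A) (y y' : Fin 2), ∑ b, p x y a b = ∑ b, p x y' a b) ∧
  (∀ (y : Fin 2) (b : B) (x x' : Fin 2), ∑ a, p x y a b = ∑ a, p x' y a b)

def IsBehavior {A B : Type*} [Fintype A] [Fintype B]
    (p : Fin 2 → Fin 2 → A → B → ℝ) : Prop :=
  (∀ x y a b, 0 ≤ p x y a b) ∧ ∀ x y, ∑ a, ∑ b, p x y a b = 1

/-- Membership in the cone generated by the local polytope. -/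
def InConeL {A B : Type*} [Fintype A] [Fintype B] [DecidableEq A] [DecidableEq B]
    (P' : Fin 2 → Fin 2 → A → B → ℝ) : Prop :=
  ∃ (r : ℝ) (Q : Fin 2 → Fin 2 → A → B → ℝ), 0 ≤ r ∧ IsLocal Q ∧
    P' = fun x y a b => r * Q x y a b

/-- Standard robustness. -/
noncomputable def RS {A B : Type*} [Fintype A] [Fintype B] [DecidableEq A] [DecidableEq B]
    (P : Fin 2 → Fin 2 → A → B → ℝ) : ℝ :=
  sInf {r : ℝ | 0 ≤ r ∧ ∃ Q : Fin 2 → Fin 2 → A → B → ℝ, IsLocal Q ∧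
    IsLocal (fun x y a b => (1 + r)⁻¹ * (P x y a b + r * Q x y a b))}

/-!
A feasible point of the linear program is `P' = r₁ • Q₁` with `P' - P = r₂ • Q₂` for local
`Q₁, Q₂`. Every behaviour has total weight `4`, so comparing total weights forces `r₁ = 1 + r₂`,
and then `Q₁ = (P + r₂ • Q₂) / (1 + r₂)` exhibits `r₂` as a robustness witness; conversely a witness
`(r, Q)` yields the feasible point `P + r • Q` of total weight `4 * (1 + r)`. Hence the values of
the program are the image of the robustness witnesses under the increasing map `r ↦ 4 * (1 + r)`,
which commutes with infima of nonempty sets bounded below.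

Nonemptiness is where no-signalling enters: in the two-input scenario a no-signalling behaviour is
an affine combination `∑ λ_fg D_fg` of deterministic boxes, and mixing in the local box with
weights `|λ_fg| / ∑ |λ|` makes it local.
-/

section DeterministicMixture

variable {X Y A B : Type*} [Fintype X] [Fintype Y] [Fintype A] [Fintype B]
  [DecidableEq X] [DecidableEq Y] [DecidableEq A] [DecidableEq B]

def detMix : ((X → A) → (Y → B) → ℝ) →ₗ[ℝ] X → Y → A → B → ℝ where
  toFun l x y a b := ∑ f, ∑ g, if f x = a ∧ g y = b then l f g else 0
  map_add' l m := by
    ext x y a b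
    simp only [Pi.add_apply, ← sum_add_distrib]
    refine sum_congr rfl fun f _ => sum_congr rfl fun g _ => ?_
    split_ifs <;> simp
  map_smul' c l := by
    ext x y a b
    simp only [Pi.smul_apply, smul_eq_mul, RingHom.id_apply, mul_sum]
    refine sum_congr rfl fun f _ => sum_congr rfl fun g _ => ?_
    split_ifs <;> simp

theorem detMix_apply (l : (X → A) → (Y → B) → ℝ) (x : X) (y : Y) (a : A) (b : B) :
    detMix l x y a b = ∑ f, ∑ g, if f x = a ∧ g y = b then l f g else 0 :=
  rfl

theorem sum_detMix (l : (X → A) → (Y → B) → ℝ) (x : X) (y : Y) :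
    ∑ a, ∑ b, detMix l x y a b = ∑ f, ∑ g, l f g := by
  simp only [detMix_apply, ite_and]
  rw [sum_comm]
  simp only [sum_comm (γ := A), sum_ite_eq]
  rw [sum_comm]
  simp only [sum_comm (γ := B), sum_ite_eq, mem_univ, if_true]

end DeterministicMixture

section

variable {A B : Type*} [Fintype A] [Fintype B]

theorem IsBehavior.sum_eq_four {Q : Fin 2 → Fin 2 → A → B → ℝ} (hQ : IsBehavior Q) :
    ∑ x, ∑ y, ∑ a, ∑ b, Q x y a b = 4 := by
  simp only [hQ.2]
  norm_num

theorem IsBehavior.sum_mul {Q : Fin 2 → Fin 2 → A → B → ℝ} (hQ : IsBehavior Q) (r : ℝ) :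
    ∑ x, ∑ y, ∑ a, ∑ b, r * Q x y a b = 4 * r := by
  simp only [← mul_sum, hQ.sum_eq_four, mul_comm]

theorem sum_fin_two_arrow {M : Type*} [AddCommMonoid M] (φ : (Fin 2 → A) → M) :
    ∑ f, φ f = ∑ a₀, ∑ a₁, φ ![a₀, a₁] := by
  rw [← (finTwoArrowEquiv A).symm.sum_comp, Fintype.sum_prod_type]
  rfl

def marginalA (P : Fin 2 → Fin 2 → A → B → ℝ) (x : Fin 2) (a : A) : ℝ := ∑ b, P x 0 a b

def marginalB (P : Fin 2 → Fin 2 → A → B → ℝ) (y : Fin 2) (b : B) : ℝ := ∑ a, P 0 y a b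

/-- Each correlation term reproduces `P` on its own pair of settings and contributes the product of
marginals on the other three pairs; the last term cancels these contributions. -/
def quasiWeight (P : Fin 2 → Fin 2 → A → B → ℝ) (f : Fin 2 → A) (g : Fin 2 → B) : ℝ :=
  P 0 0 (f 0) (g 0) * marginalA P 1 (f 1) * marginalB P 1 (g 1)
  + P 0 1 (f 0) (g 1) * marginalA P 1 (f 1) * marginalB P 0 (g 0)
  + P 1 0 (f 1) (g 0) * marginalA P 0 (f 0) * marginalB P 1 (g 1)
  + P 1 1 (f 1) (g 1) * marginalA P 0 (f 0) * marginalB P 0 (g 0)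
  - 3 * marginalA P 0 (f 0) * marginalA P 1 (f 1) * marginalB P 0 (g 0) * marginalB P 1 (g 1)

variable [DecidableEq A] [DecidableEq B]

theorem isLocal_iff (p : Fin 2 → Fin 2 → A → B → ℝ) :
    IsLocal p ↔ ∃ l, (∀ f g, 0 ≤ l f g) ∧ ∑ f, ∑ g, l f g = 1 ∧ detMix l = p := by
  simp only [IsLocal, funext_iff, detMix_apply, eq_comm (b := p _ _ _ _)]

theorem IsLocal.isBehavior {Q : Fin 2 → Fin 2 → A → B → ℝ} (hQ : IsLocal Q) : IsBehavior Q := by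
  obtain ⟨l, hl, hl1, rfl⟩ := (isLocal_iff Q).1 hQ
  refine ⟨fun x y a b => ?_, fun x y => (sum_detMix l x y).trans hl1⟩
  exact sum_nonneg fun f _ => sum_nonneg fun g _ => by split_ifs <;> simp [hl]

theorem detMix_quasiWeight {P : Fin 2 → Fin 2 → A → B → ℝ} (hP : IsBehavior P)
    (hNS : NoSignaling P) : detMix (quasiWeight P) = P := by
  have hA (x y a) : ∑ b, P x y a b = marginalA P x a := hNS.1 x a y 0
  have hB (x y b) : ∑ a, P x y a b = marginalB P y b := hNS.2 y b x 0
  have hA1 (x) : ∑ a, marginalA P x a = 1 := hP.2 x 0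
  have hB1 (y) : ∑ b, marginalB P y b = 1 := by
    simp only [marginalB]
    rw [sum_comm]
    exact hP.2 0 y
  ext x y a b
  simp only [detMix_apply, sum_fin_two_arrow (A := A), sum_fin_two_arrow (A := B)]
  fin_cases x <;> fin_cases y <;>
    simp only [Fin.zero_eta, Fin.mk_one, Fin.isValue, Matrix.cons_val_zero, Matrix.cons_val_one,
      Matrix.cons_val_fin_one, quasiWeight, ite_and, sum_ite_irrel, sum_ite_eq', mem_univ,
      ↓reduceIte, sum_const_zero, sum_sub_distrib, sum_add_distrib, ← sum_mul, ← mul_sum,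
      hA, hB, hA1, hB1] <;>
    ring

def robustnessSet (P : Fin 2 → Fin 2 → A → B → ℝ) : Set ℝ :=
  {r | 0 ≤ r ∧ ∃ Q : Fin 2 → Fin 2 → A → B → ℝ, IsLocal Q ∧
    IsLocal (fun x y a b => (1 + r)⁻¹ * (P x y a b + r * Q x y a b))}

theorem robustnessSet_nonempty_of_detMix (l : (Fin 2 → A) → (Fin 2 → B) → ℝ)
    (hl : ∑ f, ∑ g, l f g = 1) : (robustnessSet (detMix l)).Nonempty := by
  set S := ∑ f, ∑ g, |l f g|
  have hS : 1 ≤ S := hl ▸ sum_le_sum fun f _ => sum_le_sum fun g _ => le_abs_self _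
  have hS0 : 0 < S := by linarith
  have hS1 : 0 < 1 + S := by linarith
  refine ⟨S, hS0.le, detMix (S⁻¹ • fun f g => |l f g|), ?_, ?_⟩
  · refine (isLocal_iff _).2
      ⟨_, fun f g => mul_nonneg (inv_nonneg.2 hS0.le) (abs_nonneg _), ?_, rfl⟩
    simp only [← mul_sum]
    exact inv_mul_cancel₀ hS0.ne'
  · change IsLocal ((1 + S)⁻¹ • (detMix l + S • detMix (S⁻¹ • fun f g => |l f g|)))
    refine (isLocal_iff _).2 ⟨(1 + S)⁻¹ • (l + fun f g => |l f g|), fun f g => ?_, ?_, ?_⟩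
    · have hneg := neg_abs_le (l f g)
      simp only [Pi.smul_apply, Pi.add_apply, smul_eq_mul]
      exact mul_nonneg (inv_nonneg.2 hS1.le) (by linarith)
    · simp only [Pi.smul_apply, Pi.add_apply, smul_eq_mul, ← mul_sum, sum_add_distrib, hl]
      exact inv_mul_cancel₀ hS1.ne'
    · rw [map_smul, map_add, map_smul, smul_smul, mul_inv_cancel₀ hS0.ne', one_smul]

theorem robustnessSet_nonempty {P : Fin 2 → Fin 2 → A → B → ℝ} (hP : IsBehavior P)
    (hNS : NoSignaling P) : (robustnessSet P).Nonempty := by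
  have h1 : ∑ f, ∑ g, quasiWeight P f g = 1 := by
    rw [← sum_detMix _ 0 0, detMix_quasiWeight hP hNS, hP.2 0 0]
  simpa only [detMix_quasiWeight hP hNS] using robustnessSet_nonempty_of_detMix _ h1

def lpValues (P : Fin 2 → Fin 2 → A → B → ℝ) : Set ℝ :=
  {s | ∃ P' : Fin 2 → Fin 2 → A → B → ℝ,
    InConeL P' ∧ InConeL (fun x y a b => P' x y a b - P x y a b) ∧
    s = ∑ x, ∑ y, ∑ a, ∑ b, P' x y a b}

theorem lpValues_eq_image {P : Fin 2 → Fin 2 → A → B → ℝ} (hP : IsBehavior P) :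
    lpValues P = (fun r => 4 * (1 + r)) '' robustnessSet P := by
  ext s
  constructor
  · rintro ⟨_, ⟨r₁, Q₁, -, hQ₁, rfl⟩, ⟨r₂, Q₂, hr₂, hQ₂, hdiff⟩, rfl⟩
    have htotal := congrArg (fun F => ∑ x, ∑ y, ∑ a, ∑ b, F x y a b) hdiff
    simp only [sum_sub_distrib, hQ₁.isBehavior.sum_mul, hQ₂.isBehavior.sum_mul,
      hP.sum_eq_four] at htotal
    obtain rfl : r₁ = 1 + r₂ := by linarith
    refine ⟨r₂, ⟨hr₂, Q₂, hQ₂, ?_⟩, (hQ₁.isBehavior.sum_mul _).symm⟩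
    convert hQ₁ using 1
    ext x y a b
    have hpt := funext_iff.1 (funext_iff.1 (funext_iff.1 (funext_iff.1 hdiff x) y) a) b
    beta_reduce at hpt
    field_simp
    linarith
  · rintro ⟨r, ⟨hr, Q, hQ, hL⟩, rfl⟩
    refine ⟨fun x y a b => P x y a b + r * Q x y a b, ⟨1 + r, _, by positivity, hL, ?_⟩,
      ⟨r, Q, hr, hQ, by simp⟩, ?_⟩
    · ext x y a b
      field_simp
    · simp only [sum_add_distrib, hQ.isBehavior.sum_mul]
      rw [hP.sum_eq_four]
      ring

end

theorem RS_linear_program_general {A B : Type*} [Fintype A] [Fintype B]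
    [DecidableEq A] [DecidableEq B]
    (P : Fin 2 → Fin 2 → A → B → ℝ) (hP : IsBehavior P) (hNS : NoSignaling P) :
    1 + RS P = (1 / 4) * sInf {s : ℝ | ∃ P' : Fin 2 → Fin 2 → A → B → ℝ,
      InConeL P' ∧ InConeL (fun x y a b => P' x y a b - P x y a b) ∧
      s = ∑ x, ∑ y, ∑ a, ∑ b, P' x y a b} := by
  have hmono : Monotone fun r : ℝ => 4 * (1 + r) := fun r s h => by dsimp only; linarith
  change 1 + sInf (robustnessSet P) = 1 / 4 * sInf (lpValues P)
  rw [lpValues_eq_image hP, ← hmono.map_csInf_of_continuousAt (by fun_prop)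
    (robustnessSet_nonempty hP hNS) ⟨0, fun r hr => hr.1⟩]
  ring

/-- LP reformulation of the standard robustness,
`1 + R_S(P) = (1/4)·min { uᵀP' : P' ∈ Cone(L), P' − P ∈ Cone(L) }`. -/
theorem RS_linear_program {A B : Type*} [Fintype A] [Fintype B]
    [DecidableEq A] [DecidableEq B] [Nonempty A] [Nonempty B]
    (P : Fin 2 → Fin 2 → A → B → ℝ) (hP : IsBehavior P) (hNS : NoSignaling P) :
    1 + RS P = (1 / 4) * sInf {s : ℝ | ∃ P' : Fin 2 → Fin 2 → A → B → ℝ,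
      InConeL P' ∧ InConeL (fun x y a b => P' x y a b - P x y a b) ∧
      s = ∑ x, ∑ y, ∑ a, ∑ b, P' x y a b} :=
  RS_linear_program_general P hP hNS
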